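/- Let D be a metric on a finite set X, x ∈ X, X' := X \ {x}, and D' the restriction of D to X'. If f ∈ cut*(D) is not a Kuratowski map and there is no block split S = A|B of X with f ∈ {f_A, f_B}, then the restriction f' of f to X' satisfies: f' ∈ P(D'), Γ_{f'} is disconnected but not the disjoint union of two cliques, f' ∈ T(D'), and f(x) = max{D(x,y) − f'(y) : y ∈ X'}. -/

import Mathlib

open Classical

variable {X : Type*}

/-- `D` is a metric on `X`. -/
def IsMetric (D : X → X → ℝ) : Prop :=
  (∀ x, D x x = 0) ∧ (∀ x y, D x y = D y x) ∧
  (∀ x y z, D x z ≤ D x y + D y z) ∧ (∀ x y, x ≠ y → 0 < D x y)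

/-- `f ∈ P(D)`. -/
def memP (D : X → X → ℝ) (f : X → ℝ) : Prop := ∀ x y, D x y ≤ f x + f y

/-- The virtual distance `D(f|Y) = (1/2) min {f y + f y' - D y y' : y, y' ∈ Y}`. -/
noncomputable def vdist (D : X → X → ℝ) (f : X → ℝ) (Y : Set X) : ℝ :=
  (1 / 2) * sInf {z | ∃ y ∈ Y, ∃ y' ∈ Y, z = f y + f y' - D y y'}

/-- `D(x|Y) := D(k_x|Y)` for the Kuratowski map `k_x`. -/
noncomputable def kdist (D : X → X → ℝ) (x : X) (Y : Set X) : ℝ :=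
  vdist D (fun y => D x y) Y

/-- The isolation index `α_S` of the split `S = A|B`. -/
noncomputable def isoIdx (D : X → X → ℝ) (A B : Set X) : ℝ :=
  (1 / 2) * sInf {z | ∃ a ∈ A, ∃ a' ∈ A, ∃ b ∈ B, ∃ b' ∈ B,
      z = max (D a b + D a' b') (D a b' + D a' b) - D a a' - D b b'}

/-- Adjacency in the graph `Γ_f`: vertices are points of the support of `f`,
and `x y` are joined iff `f x + f y > D x y`. -/
def adj (D : X → X → ℝ) (f : X → ℝ) (x y : X) : Prop :=
  x ≠ y ∧ f x ≠ 0 ∧ f y ≠ 0 ∧ D x y < f x + f y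

/-- The graph `Γ_f` (on vertex set `supp f`) is disconnected. -/
def Disconn (D : X → X → ℝ) (f : X → ℝ) : Prop :=
  ∃ U V : Set X, U.Nonempty ∧ V.Nonempty ∧ Disjoint U V ∧
    U ∪ V = {x | f x ≠ 0} ∧ ∀ u ∈ U, ∀ v ∈ V, ¬ adj D f u v

/-- `Γ_f` is the disjoint union of two cliques with vertex sets `A` and `B`. -/
def DisjUnionTwoCliques (D : X → X → ℝ) (f : X → ℝ) (A B : Set X) : Prop :=
  A.Nonempty ∧ B.Nonempty ∧ Disjoint A B ∧ A ∪ B = {x | f x ≠ 0} ∧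
  (∀ a ∈ A, ∀ a' ∈ A, a ≠ a' → adj D f a a') ∧
  (∀ b ∈ B, ∀ b' ∈ B, b ≠ b' → adj D f b b') ∧
  (∀ a ∈ A, ∀ b ∈ B, ¬ adj D f a b)

/-- `A|B` is a block split of `X` relative to `D`. -/
def IsBlockSplit (D : X → X → ℝ) (A B : Set X) : Prop :=
  ∃ f : X → ℝ, memP D f ∧ (∀ x, f x ≠ 0) ∧ DisjUnionTwoCliques D f A B

/-- `f` lies in the tight span `T(D)`:  `f x = max_y (D x y - f y)` for all `x`. -/
def memT (D : X → X → ℝ) (f : X → ℝ) : Prop :=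
  ∀ x, IsGreatest (Set.range fun y => D x y - f y) (f x)

/-- The endpoint map `f_A = f_{A→α_S, B→0}` of the segment associated with a block split. -/
noncomputable def endpointA (D : X → X → ℝ) (A B : Set X) : X → ℝ :=
  fun x => if x ∈ A then kdist D x B - isoIdx D A B else kdist D x A

/-- The endpoint map `f_B = f_{A→0, B→α_S}` of the segment associated with a block split. -/
noncomputable def endpointB (D : X → X → ℝ) (A B : Set X) : X → ℝ :=
  fun x => if x ∈ A then kdist D x B else kdist D x A - isoIdx D A B

/-- `A|B` is a split (bipartition into nonempty parts) of `X`. -/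
def IsSplit (A B : Set X) : Prop :=
  A.Nonempty ∧ B.Nonempty ∧ Disjoint A B ∧ A ∪ B = Set.univ


/-!
Since `f ∈ T(D)` is not a Kuratowski map, `f > 0`, so `Γ_f` has vertex set `X`. The key fact is
that `X` has no split `A|B` with every cross pair tight (`D a b = f a + f b`) and `B` a clique of
`Γ_f`: with `ν_A = D(f|A)` and `ν_B = D(f|B) > 0` one computes `α_{A|B} = ν_A + ν_B`,
`D(b|A) = f b + ν_A` and `D(a|B) = f a + ν_B`, so either `ν_A > 0` and `Γ_f` is the disjoint union
of the cliques `A` and `B`, or `ν_A = 0`, `f = f_A` and `A|B` is a block split.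

Taking `B = {x}` shows that `x` has a neighbour in `Γ_f`, so the component of `x` in `Γ_f` leaves
out a point of `X'` and `Γ_{f'}` is disconnected. If `Γ_{f'}` were two cliques, `x` could not meet
both (`Γ_f` would be connected), and the clique it misses would be such a `B`. Finally, if
`max_{y ∈ X'} (D z y - f y) < f z`, then `z` is adjacent to all of `X' \ {z}`, and its component
would contain `X'` and the neighbour of `x`, i.e. all of `X`.
-/

open scoped Pointwise

section VirtualDistance

variable {D : X → X → ℝ} {f g : X → ℝ} {Y A B : Set X}

def vdistSet (D : X → X → ℝ) (f : X → ℝ) (Y : Set X) : Set ℝ :=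
  {z | ∃ y ∈ Y, ∃ y' ∈ Y, z = f y + f y' - D y y'}

lemma vdist_eq_half_sInf : vdist D f Y = 1 / 2 * sInf (vdistSet D f Y) := rfl

lemma vdistSet_nonempty (hY : Y.Nonempty) : (vdistSet D f Y).Nonempty :=
  let ⟨y, hy⟩ := hY
  ⟨_, y, hy, y, hy, rfl⟩

lemma nonneg_of_mem_vdistSet (hP : memP D f) {z : ℝ} (hz : z ∈ vdistSet D f Y) : 0 ≤ z := by
  obtain ⟨y, -, y', -, rfl⟩ := hz
  linarith [hP y y']

lemma bddBelow_vdistSet (hP : memP D f) : BddBelow (vdistSet D f Y) :=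
  ⟨0, fun _ hz => nonneg_of_mem_vdistSet hP hz⟩

lemma vdist_nonneg (hP : memP D f) : 0 ≤ vdist D f Y := by
  rw [vdist_eq_half_sInf]
  exact mul_nonneg (by norm_num) (Real.sInf_nonneg fun _ hz => nonneg_of_mem_vdistSet hP hz)

lemma two_mul_vdist_le (hP : memP D f) {y y' : X} (hy : y ∈ Y) (hy' : y' ∈ Y) :
    2 * vdist D f Y ≤ f y + f y' - D y y' := by
  rw [vdist_eq_half_sInf]
  linarith [csInf_le (bddBelow_vdistSet hP) ⟨y, hy, y', hy', rfl⟩]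

lemma finite_vdistSet [Finite X] : (vdistSet D f Y).Finite :=
  (Set.finite_range fun p : X × X => f p.1 + f p.2 - D p.1 p.2).subset
    (by rintro _ ⟨y, -, y', -, rfl⟩; exact ⟨(y, y'), rfl⟩)

lemma vdist_pos [Finite X] (hD : IsMetric D) (hf : ∀ y, 0 < f y) (hY : Y.Nonempty)
    (hclique : ∀ y ∈ Y, ∀ y' ∈ Y, y ≠ y' → D y y' < f y + f y') : 0 < vdist D f Y := by
  obtain ⟨y, hy, y', hy', hmin⟩ :=
    (vdistSet_nonempty hY).csInf_mem finite_vdistSet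
  rw [vdist_eq_half_sInf, hmin]
  by_cases hyy' : y = y'
  · subst hyy'
    linarith [hD.1 y, hf y]
  · linarith [hclique y hy y' hy' hyy']

lemma vdist_eq_add_of_eqOn (hP : memP D f) (hY : Y.Nonempty) {c : ℝ}
    (hg : ∀ y ∈ Y, g y = f y + c) : vdist D g Y = vdist D f Y + c := by
  have hset : vdistSet D g Y = vdistSet D f Y + {2 * c} := by
    ext z
    simp only [vdistSet, Set.add_singleton, Set.mem_image, Set.mem_ofPred_eq]
    constructor
    · rintro ⟨y, hy, y', hy', rfl⟩
      exact ⟨_, ⟨y, hy, y', hy', rfl⟩, by rw [hg y hy, hg y' hy']; ring⟩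
    · rintro ⟨_, ⟨y, hy, y', hy', rfl⟩, rfl⟩
      exact ⟨y, hy, y', hy', by rw [hg y hy, hg y' hy']; ring⟩
  rw [vdist_eq_half_sInf, vdist_eq_half_sInf, hset,
    csInf_add (vdistSet_nonempty hY) (bddBelow_vdistSet hP) (Set.singleton_nonempty _)
      (bddBelow_singleton), csInf_singleton]
  ring

end VirtualDistance

section TightSplit

variable {D : X → X → ℝ} {f g : X → ℝ} {A B : Set X}

lemma IsSplit.mem_or_mem (hS : IsSplit A B) (u : X) : u ∈ A ∨ u ∈ B :=
  by rw [← Set.mem_union, hS.2.2.2]; trivial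

lemma kdist_eq_vdist_add (hP : memP D f) (hA : A.Nonempty) {u : X}
    (hu : ∀ a ∈ A, D u a = f a + f u) : kdist D u A = vdist D f A + f u :=
  vdist_eq_add_of_eqOn hP hA hu

lemma isoIdx_eq_vdist_add_vdist (hP : memP D f) (hA : A.Nonempty) (hB : B.Nonempty)
    (hAB : ∀ a ∈ A, ∀ b ∈ B, D a b = f a + f b) :
    isoIdx D A B = vdist D f A + vdist D f B := by
  have hset : {z | ∃ a ∈ A, ∃ a' ∈ A, ∃ b ∈ B, ∃ b' ∈ B,
      z = max (D a b + D a' b') (D a b' + D a' b) - D a a' - D b b'} =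
      vdistSet D f A + vdistSet D f B := by
    ext z
    simp only [Set.mem_add, vdistSet, Set.mem_ofPred_eq]
    have hmax : ∀ a ∈ A, ∀ a' ∈ A, ∀ b ∈ B, ∀ b' ∈ B,
        max (D a b + D a' b') (D a b' + D a' b) = f a + f a' + (f b + f b') := by
      intro a ha a' ha' b hb b' hb'
      rw [hAB a ha b hb, hAB a' ha' b' hb', hAB a ha b' hb', hAB a' ha' b hb,
        max_eq_left (by linarith)]
      ring
    constructor
    · rintro ⟨a, ha, a', ha', b, hb, b', hb', rfl⟩
      exact ⟨_, ⟨a, ha, a', ha', rfl⟩, _, ⟨b, hb, b', hb', rfl⟩,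
        by rw [hmax a ha a' ha' b hb b' hb']; ring⟩
    · rintro ⟨_, ⟨a, ha, a', ha', rfl⟩, _, ⟨b, hb, b', hb', rfl⟩, rfl⟩
      exact ⟨a, ha, a', ha', b, hb, b', hb', by rw [hmax a ha a' ha' b hb b' hb']; ring⟩
  rw [isoIdx, hset, csInf_add (vdistSet_nonempty hA) (bddBelow_vdistSet hP)
    (vdistSet_nonempty hB) (bddBelow_vdistSet hP), vdist_eq_half_sInf, vdist_eq_half_sInf]
  ring

lemma endpointA_eq_of_vdist_eq_zero (hD : IsMetric D) (hP : memP D f) (hS : IsSplit A B)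
    (hAB : ∀ a ∈ A, ∀ b ∈ B, D a b = f a + f b) (h0 : vdist D f A = 0) :
    endpointA D A B = f := by
  obtain ⟨hA, hB, -⟩ := id hS
  funext u
  by_cases hu : u ∈ A
  · have hk := kdist_eq_vdist_add hP hB fun b hb => (hAB u hu b hb).trans (add_comm _ _)
    simp only [endpointA, if_pos hu, hk, isoIdx_eq_vdist_add_vdist hP hA hB hAB, h0]
    ring
  · have huB : u ∈ B := (hS.mem_or_mem u).resolve_left hu
    have hk := kdist_eq_vdist_add hP hA fun a ha => (hD.2.1 u a).trans (hAB a ha u huB)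
    simp only [endpointA, if_neg hu, hk, h0, zero_add]

lemma disjUnionTwoCliques_of_isSplit (hS : IsSplit A B) (hg : ∀ u, g u ≠ 0)
    (hAA : ∀ a ∈ A, ∀ a' ∈ A, a ≠ a' → D a a' < g a + g a')
    (hBB : ∀ b ∈ B, ∀ b' ∈ B, b ≠ b' → D b b' < g b + g b')
    (hAB : ∀ a ∈ A, ∀ b ∈ B, D a b = g a + g b) : DisjUnionTwoCliques D g A B := by
  obtain ⟨hA, hB, hdisj, hcover⟩ := hS
  refine ⟨hA, hB, hdisj, ?_, fun a ha a' ha' h => ⟨h, hg a, hg a', hAA a ha a' ha' h⟩,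
    fun b hb b' hb' h => ⟨h, hg b, hg b', hBB b hb b' hb' h⟩,
    fun a ha b hb h => h.2.2.2.ne (hAB a ha b hb)⟩
  rw [hcover]
  exact (Set.eq_univ_of_forall hg).symm

lemma disjUnionTwoCliques_of_vdist_pos (hP : memP D f) (hf : ∀ y, 0 < f y)
    (hS : IsSplit A B) (hAB : ∀ a ∈ A, ∀ b ∈ B, D a b = f a + f b)
    (hA : 0 < vdist D f A) (hB : 0 < vdist D f B) : DisjUnionTwoCliques D f A B :=
  disjUnionTwoCliques_of_isSplit hS (fun u => (hf u).ne')
    (fun a ha a' ha' _ => by linarith [two_mul_vdist_le hP ha ha'])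
    (fun b hb b' hb' _ => by linarith [two_mul_vdist_le hP hb hb']) hAB

lemma isBlockSplit_of_vdist_add_pos (hD : IsMetric D) (hP : memP D f) (hS : IsSplit A B)
    (hAB : ∀ a ∈ A, ∀ b ∈ B, D a b = f a + f b)
    (hν : 0 < vdist D f A + vdist D f B) : IsBlockSplit D A B := by
  have hdisj := hS.2.2.1
  -- this `t` leaves every pair inside `A` or inside `B` a slack of at least `ν_A + ν_B`
  set t := (vdist D f B - vdist D f A) / 2 with ht
  set g : X → ℝ := fun u => if u ∈ A then f u + t else f u - t
  have hgA : ∀ a ∈ A, g a = f a + t := fun a ha => if_pos ha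
  have hgB : ∀ b ∈ B, g b = f b - t := fun b hb => if_neg (Set.disjoint_right.1 hdisj hb)
  have hAA : ∀ a ∈ A, ∀ a' ∈ A, D a a' < g a + g a' := fun a ha a' ha' => by
    rw [hgA a ha, hgA a' ha', ht]; linarith [two_mul_vdist_le hP ha ha']
  have hBB : ∀ b ∈ B, ∀ b' ∈ B, D b b' < g b + g b' := fun b hb b' hb' => by
    rw [hgB b hb, hgB b' hb', ht]; linarith [two_mul_vdist_le hP hb hb']
  have hgAB : ∀ a ∈ A, ∀ b ∈ B, D a b = g a + g b := fun a ha b hb => by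
    rw [hgA a ha, hgB b hb, hAB a ha b hb]; ring
  have hgP : memP D g := by
    intro u v
    rcases hS.mem_or_mem u with hu | hu <;> rcases hS.mem_or_mem v with hv | hv
    · exact (hAA u hu v hv).le
    · exact (hgAB u hu v hv).le
    · rw [hD.2.1, add_comm]; exact (hgAB v hv u hu).le
    · exact (hBB u hu v hv).le
  have hg : ∀ u, g u ≠ 0 := fun u => by
    have h := (hS.mem_or_mem u).elim (fun hu => hAA u hu u hu) fun hu => hBB u hu u hu
    rw [hD.1] at h
    linarith
  exact ⟨g, hgP, hg, disjUnionTwoCliques_of_isSplit hS hg (fun a ha a' ha' _ => hAA a ha a' ha')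
    (fun b hb b' hb' _ => hBB b hb b' hb') hgAB⟩

lemma disjUnionTwoCliques_or_endpointA [Finite X] (hD : IsMetric D) (hP : memP D f)
    (hf : ∀ y, 0 < f y) (hS : IsSplit A B) (hAB : ∀ a ∈ A, ∀ b ∈ B, D a b = f a + f b)
    (hB : ∀ b ∈ B, ∀ b' ∈ B, b ≠ b' → D b b' < f b + f b') :
    DisjUnionTwoCliques D f A B ∨ (IsBlockSplit D A B ∧ f = endpointA D A B) := by
  have hνB : 0 < vdist D f B := vdist_pos hD hf hS.2.1 hB
  rcases (vdist_nonneg (Y := A) hP).eq_or_lt with h0 | hνA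
  · exact Or.inr ⟨isBlockSplit_of_vdist_add_pos hD hP hS hAB (by linarith),
      (endpointA_eq_of_vdist_eq_zero hD hP hS hAB h0.symm).symm⟩
  · exact Or.inl (disjUnionTwoCliques_of_vdist_pos hP hf hS hAB hνA hνB)

end TightSplit

section TightSpan

variable {D : X → X → ℝ} {f : X → ℝ}

lemma memP_of_memT (hT : memT D f) : memP D f := fun u v => by
  linarith [(hT u).2 ⟨v, rfl⟩]

lemma nonneg_of_memT (hD : IsMetric D) (hT : memT D f) (y : X) : 0 ≤ f y := by
  linarith [(hT y).2 ⟨y, rfl⟩, hD.1 y]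

lemma eq_dist_of_memT_of_eq_zero (hD : IsMetric D) (hT : memT D f) {y : X} (hy : f y = 0) :
    f = fun z => D y z := by
  obtain ⟨-, dsymm, dtri, -⟩ := hD
  funext z
  obtain ⟨w, hw⟩ := (hT z).1
  have hle : f z ≤ D y z := by
    linarith [(hT y).2 ⟨w, rfl⟩, dtri z y w, dsymm z y, show D z w - f w = f z from hw]
  have hge : D y z ≤ f z := by linarith [(hT z).2 ⟨y, rfl⟩, dsymm z y]
  exact le_antisymm hle hge

lemma pos_of_memT (hD : IsMetric D) (hT : memT D f) (hK : ∀ z : X, f ≠ fun y => D z y)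
    (y : X) : 0 < f y :=
  (nonneg_of_memT hD hT y).lt_of_ne' fun hy => hK y (eq_dist_of_memT_of_eq_zero hD hT hy)

end TightSpan

section Graph

variable {D : X → X → ℝ} {f : X → ℝ} {u v : X}

lemma adj_symm (hD : IsMetric D) (h : adj D f u v) : adj D f v u :=
  ⟨h.1.symm, h.2.2.1, h.2.1, by rw [hD.2.1, add_comm]; exact h.2.2.2⟩

lemma eq_add_of_not_adj (hP : memP D f) (hf : ∀ y, 0 < f y) (huv : u ≠ v)
    (h : ¬ adj D f u v) : D u v = f u + f v :=
  (hP u v).eq_of_not_lt fun hlt => h ⟨huv, (hf u).ne', (hf v).ne', hlt⟩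

lemma adj_restrict {p : X → Prop} (a b : {y // p y}) :
    adj (fun u v : {y // p y} => D u.1 v.1) (fun u => f u.1) a b ↔ adj D f a b := by
  simp only [adj, ne_eq, Subtype.ext_iff]

lemma exists_adjClosed_of_disconn (hD : IsMetric D) (hf : ∀ y, 0 < f y)
    (hdis : Disconn D f) (p : X) :
    ∃ U : Set X, p ∈ U ∧ (∃ q, q ∉ U) ∧ ∀ u ∈ U, ∀ v, adj D f u v → v ∈ U := by
  obtain ⟨U, V, hU, hV, hUV, hcover, hnadj⟩ := hdis
  have hmem : ∀ u, u ∈ U ∨ u ∈ V := fun u => by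
    rw [← Set.mem_union, hcover]; exact (hf u).ne'
  have hclosed : ∀ U V : Set X, V.Nonempty → Disjoint U V → (∀ u, u ∈ U ∨ u ∈ V) →
      (∀ u ∈ U, ∀ v ∈ V, ¬ adj D f u v) →
      (∃ q, q ∉ U) ∧ ∀ u ∈ U, ∀ v, adj D f u v → v ∈ U :=
    fun U V ⟨q, hq⟩ hUV hmem hnadj =>
      ⟨⟨q, Set.disjoint_right.1 hUV hq⟩,
        fun u hu v h => (hmem v).resolve_right fun hv => hnadj u hu v hv h⟩
  rcases hmem p with hp | hp
  · exact ⟨U, hp, hclosed U V hV hUV hmem hnadj⟩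
  · exact ⟨V, hp, hclosed V U hU hUV.symm (fun u => (hmem u).symm)
      fun v hv u hu h => hnadj u hu v hv (adj_symm hD h)⟩

end Graph

section CutPoint

variable [Finite X] {D : X → X → ℝ} {f : X → ℝ} {A B : Set X} {x : X}

lemma false_of_tight_split (hD : IsMetric D) (hP : memP D f) (hf : ∀ y, 0 < f y)
    (hnc : ¬ ∃ A B : Set X, DisjUnionTwoCliques D f A B)
    (hnoBS : ¬ ∃ A B : Set X, IsBlockSplit D A B ∧
      (f = endpointA D A B ∨ f = endpointB D A B))
    (hS : IsSplit A B) (hAB : ∀ a ∈ A, ∀ b ∈ B, D a b = f a + f b)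
    (hB : ∀ b ∈ B, ∀ b' ∈ B, b ≠ b' → D b b' < f b + f b') : False :=
  (disjUnionTwoCliques_or_endpointA hD hP hf hS hAB hB).elim (fun h => hnc ⟨A, B, h⟩)
    fun h => hnoBS ⟨A, B, h.1, Or.inl h.2⟩

lemma exists_adj_of_ne (hD : IsMetric D) (hP : memP D f) (hf : ∀ y, 0 < f y)
    (hnc : ¬ ∃ A B : Set X, DisjUnionTwoCliques D f A B)
    (hnoBS : ¬ ∃ A B : Set X, IsBlockSplit D A B ∧
      (f = endpointA D A B ∨ f = endpointB D A B))
    {z : X} (hz : z ≠ x) : ∃ u, adj D f x u := by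
  by_contra! h
  refine false_of_tight_split hD hP hf hnc hnoBS (A := {x}ᶜ) (B := {x})
    ⟨⟨z, hz⟩, Set.singleton_nonempty x, disjoint_compl_left, Set.compl_union_self _⟩ ?_ ?_
  · rintro a ha b rfl
    exact eq_add_of_not_adj hP hf ha fun hab => h a (adj_symm hD hab)
  · rintro b rfl b' rfl hne
    exact absurd rfl hne

lemma false_of_not_adj_clique (hD : IsMetric D) (hP : memP D f) (hf : ∀ y, 0 < f y)
    (hnc : ¬ ∃ A B : Set X, DisjUnionTwoCliques D f A B)
    (hnoBS : ¬ ∃ A B : Set X, IsBlockSplit D A B ∧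
      (f = endpointA D A B ∨ f = endpointB D A B))
    (hdisj : Disjoint A B) (hcover : A ∪ B = {x}ᶜ) (hB : B.Nonempty)
    (hBcl : ∀ b ∈ B, ∀ b' ∈ B, b ≠ b' → adj D f b b')
    (hAB : ∀ a ∈ A, ∀ b ∈ B, ¬ adj D f a b) (hxB : ∀ b ∈ B, ¬ adj D f x b) : False := by
  have hxB' : x ∉ B := fun h => (hcover.subset (Or.inr h) : x ∈ ({x}ᶜ : Set X)) rfl
  refine false_of_tight_split hD hP hf hnc hnoBS (A := insert x A) (B := B)
    ⟨Set.insert_nonempty x A, hB, Set.disjoint_insert_left.2 ⟨hxB', hdisj⟩,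
      by rw [Set.insert_union, hcover, Set.insert_eq, Set.union_compl_self]⟩ ?_
    fun b hb b' hb' hne => (hBcl b hb b' hb' hne).2.2.2
  rintro a (rfl | ha) b hb
  · exact eq_add_of_not_adj hP hf (fun h => hxB' (h ▸ hb)) (hxB b hb)
  · exact eq_add_of_not_adj hP hf (fun h => Set.disjoint_left.1 hdisj ha (h ▸ hb)) (hAB a ha b hb)

lemma false_of_two_cliques_compl_singleton (hD : IsMetric D) (hP : memP D f)
    (hf : ∀ y, 0 < f y) (hdis : Disconn D f)
    (hnc : ¬ ∃ A B : Set X, DisjUnionTwoCliques D f A B)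
    (hnoBS : ¬ ∃ A B : Set X, IsBlockSplit D A B ∧
      (f = endpointA D A B ∨ f = endpointB D A B))
    (hdisj : Disjoint A B) (hcover : A ∪ B = {x}ᶜ) (hA : A.Nonempty) (hB : B.Nonempty)
    (hAcl : ∀ a ∈ A, ∀ a' ∈ A, a ≠ a' → adj D f a a')
    (hBcl : ∀ b ∈ B, ∀ b' ∈ B, b ≠ b' → adj D f b b')
    (hAB : ∀ a ∈ A, ∀ b ∈ B, ¬ adj D f a b) : False := by
  by_cases hxA : ∃ a ∈ A, adj D f x a
  swap
  · push Not at hxA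
    exact false_of_not_adj_clique hD hP hf hnc hnoBS hdisj.symm (Set.union_comm A B ▸ hcover)
      hA hAcl (fun b hb a ha h => hAB a ha b hb (adj_symm hD h)) hxA
  by_cases hxB : ∃ b ∈ B, adj D f x b
  swap
  · push Not at hxB
    exact false_of_not_adj_clique hD hP hf hnc hnoBS hdisj hcover hB hBcl hAB hxB
  obtain ⟨U, hxU, ⟨q, hq⟩, hU⟩ := exists_adjClosed_of_disconn hD hf hdis x
  have hsub : ∀ C : Set X, (∀ c ∈ C, ∀ c' ∈ C, c ≠ c' → adj D f c c') →
      (∃ c ∈ C, adj D f x c) → C ⊆ U := by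
    rintro C hC ⟨c, hc, hxc⟩ c' hc'
    have hcU := hU x hxU c hxc
    obtain rfl | hne := eq_or_ne c c'
    exacts [hcU, hU c hcU c' (hC c hc c' hc' hne)]
  obtain rfl | hqx := eq_or_ne q x
  · exact hq hxU
  · rcases (hcover ▸ hqx : q ∈ A ∪ B) with hqA | hqB
    exacts [hq (hsub A hAcl hxA hqA), hq (hsub B hBcl hxB hqB)]

lemma exists_eq_sub_of_ne (hD : IsMetric D) (hT : memT D f) (hf : ∀ y, 0 < f y)
    (hdis : Disconn D f) (hnc : ¬ ∃ A B : Set X, DisjUnionTwoCliques D f A B)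
    (hnoBS : ¬ ∃ A B : Set X, IsBlockSplit D A B ∧
      (f = endpointA D A B ∨ f = endpointB D A B))
    {z : X} (hz : z ≠ x) : ∃ u, u ≠ x ∧ D z u - f u = f z := by
  by_contra! h
  have hzadj : ∀ u, u ≠ x → u ≠ z → adj D f z u := fun u hux huz =>
    ⟨huz.symm, (hf z).ne', (hf u).ne', by
      linarith [lt_of_le_of_ne ((hT z).2 ⟨u, rfl⟩) (h u hux)]⟩
  obtain ⟨U, hzU, ⟨q, hq⟩, hU⟩ := exists_adjClosed_of_disconn hD hf hdis z
  have hcompl : ∀ u, u ≠ x → u ∈ U := fun u hux => by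
    obtain rfl | huz := eq_or_ne u z
    exacts [hzU, hU z hzU u (hzadj u hux huz)]
  have hqx : q = x := by_contra fun hqx => hq (hcompl q hqx)
  obtain ⟨u, hu⟩ := exists_adj_of_ne hD (memP_of_memT hT) hf hnc hnoBS hz
  exact hq (hqx ▸ hU u (hcompl u hu.1.symm) x (adj_symm hD hu))

end CutPoint

section Restriction

variable {D : X → X → ℝ} {f : X → ℝ} {x : X}

lemma disconn_restrict [Finite X] (hD : IsMetric D) (hP : memP D f) (hf : ∀ y, 0 < f y)
    (hdis : Disconn D f) (hnc : ¬ ∃ A B : Set X, DisjUnionTwoCliques D f A B)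
    (hnoBS : ¬ ∃ A B : Set X, IsBlockSplit D A B ∧
      (f = endpointA D A B ∨ f = endpointB D A B)) :
    Disconn (fun u v : {y : X // y ≠ x} => D u.1 v.1) (fun u => f u.1) := by
  obtain ⟨U, hxU, ⟨q, hq⟩, hU⟩ := exists_adjClosed_of_disconn hD hf hdis x
  obtain ⟨u, hu⟩ := exists_adj_of_ne hD hP hf hnc hnoBS (z := q) fun h => hq (h ▸ hxU)
  refine ⟨{v | v.1 ∈ U}, {v | v.1 ∉ U}, ⟨⟨u, hu.1.symm⟩, hU x hxU u hu⟩,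
    ⟨⟨q, fun h => hq (h ▸ hxU)⟩, hq⟩, Set.disjoint_left.2 fun v h1 h2 => h2 h1, ?_,
    fun v hv w hw h => hw (hU v hv w ((adj_restrict v w).1 h))⟩
  ext v
  exact ⟨fun _ => (hf v).ne', fun _ => _root_.em _⟩

lemma not_disjUnionTwoCliques_restrict [Finite X] (hD : IsMetric D) (hP : memP D f)
    (hf : ∀ y, 0 < f y) (hdis : Disconn D f)
    (hnc : ¬ ∃ A B : Set X, DisjUnionTwoCliques D f A B)
    (hnoBS : ¬ ∃ A B : Set X, IsBlockSplit D A B ∧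
      (f = endpointA D A B ∨ f = endpointB D A B)) :
    ¬ ∃ A' B' : Set {y : X // y ≠ x},
      DisjUnionTwoCliques (fun u v : {y : X // y ≠ x} => D u.1 v.1) (fun u => f u.1) A' B' := by
  rintro ⟨A', B', hA', hB', hdisj, hcover, hAcl, hBcl, hAB⟩
  have hsupp : {u : {y : X // y ≠ x} | f u.1 ≠ 0} = Set.univ :=
    Set.eq_univ_of_forall fun v => (hf v.1).ne'
  have hcover' : Subtype.val '' A' ∪ Subtype.val '' B' = {x}ᶜ := by
    rw [← Set.image_union, hcover, hsupp, Set.image_univ,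
      Subtype.range_coe_subtype]
    rfl
  refine false_of_two_cliques_compl_singleton hD hP hf hdis hnc hnoBS
    ((Set.disjoint_image_iff Subtype.val_injective).2 hdisj) hcover' (hA'.image _) (hB'.image _)
    ?_ ?_ ?_
  · rintro _ ⟨a, ha, rfl⟩ _ ⟨a', ha', rfl⟩ hne
    exact (adj_restrict a a').1 (hAcl a ha a' ha' fun h => hne (congrArg _ h))
  · rintro _ ⟨b, hb, rfl⟩ _ ⟨b', hb', rfl⟩ hne
    exact (adj_restrict b b').1 (hBcl b hb b' hb' fun h => hne (congrArg _ h))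
  · rintro _ ⟨a, ha, rfl⟩ _ ⟨b, hb, rfl⟩ h
    exact hAB a ha b hb ((adj_restrict a b).2 h)

lemma isGreatest_restrict (hT : memT D f) (z : X) (hz : ∃ w, w ≠ x ∧ D z w - f w = f z) :
    IsGreatest (Set.range fun u : {y : X // y ≠ x} => D z u.1 - f u.1) (f z) :=
  ⟨let ⟨w, hwx, hw⟩ := hz; ⟨⟨w, hwx⟩, hw⟩, by rintro _ ⟨u, rfl⟩; exact (hT z).2 ⟨u.1, rfl⟩⟩

end Restriction

theorem stmt18 [Fintype X] (D : X → X → ℝ) (hD : IsMetric D) (x : X)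
    (f : X → ℝ) (hfT : memT D f) (hdis : Disconn D f)
    (hcut : (∃ y, f y = 0) ∨ ¬ ∃ A B : Set X, DisjUnionTwoCliques D f A B)
    (hnotK : ∀ z : X, f ≠ fun y => D z y)
    (hnoBS : ¬ ∃ A B : Set X, IsBlockSplit D A B ∧
      (f = endpointA D A B ∨ f = endpointB D A B)) :
    memP (fun u v : {y : X // y ≠ x} => D u.1 v.1) (fun u : {y : X // y ≠ x} => f u.1) ∧
    Disconn (fun u v : {y : X // y ≠ x} => D u.1 v.1) (fun u : {y : X // y ≠ x} => f u.1) ∧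
    (¬ ∃ A' B' : Set {y : X // y ≠ x},
      DisjUnionTwoCliques (fun u v : {y : X // y ≠ x} => D u.1 v.1)
        (fun u : {y : X // y ≠ x} => f u.1) A' B') ∧
    memT (fun u v : {y : X // y ≠ x} => D u.1 v.1) (fun u : {y : X // y ≠ x} => f u.1) ∧
    IsGreatest (Set.range fun u : {y : X // y ≠ x} => D x u.1 - f u.1) (f x) := by
  have hP : memP D f := memP_of_memT hfT
  have hf : ∀ y, 0 < f y := pos_of_memT hD hfT hnotK
  have hnc : ¬ ∃ A B : Set X, DisjUnionTwoCliques D f A B :=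
    hcut.resolve_left fun ⟨y, hy⟩ => (hf y).ne' hy
  refine ⟨fun u v => hP u v, disconn_restrict hD hP hf hdis hnc hnoBS,
    not_disjUnionTwoCliques_restrict hD hP hf hdis hnc hnoBS,
    fun z => isGreatest_restrict hfT z (exists_eq_sub_of_ne hD hfT hf hdis hnc hnoBS z.2),
    isGreatest_restrict hfT x ?_⟩
  obtain ⟨w, hw⟩ := (hfT x).1
  refine ⟨w, ?_, hw⟩
  rintro rfl
  linarith [hf w, hD.1 w, show D w w - f w = f w from hw]
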